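/- arXiv:1407.0367 — 9 statements merged into one kernel-verified Lean document; each statement's English description precedes it below -/
import Mathlib

section
/- For any graph G and any edge e of G, the Roman domination number satisfies γ_R(G) ≤ γ_R(G − e) ≤ γ_R(G) + 1. -/
/-- A Roman dominating function on `G`: labels in `{0,1,2}` and every vertex
labeled `0` has a neighbor labeled `2`. -/
def IsRDF {V : Type*} (G : SimpleGraph V) (f : V → ℕ) : Prop :=
  (∀ v, f v ≤ 2) ∧ ∀ v, f v = 0 → ∃ u, G.Adj v u ∧ f u = 2

/-- The Roman domination number of `G`. -/
noncomputable def romanDom {V : Type*} [Fintype V] (G : SimpleGraph V) : ℕ :=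
  sInf {w | ∃ f, IsRDF G f ∧ ∑ v, f v = w}

/-- The Roman domination number of the vertex-deleted graph `G - v`. -/
noncomputable def romanDomDel {V : Type*} [Fintype V] [DecidableEq V]
    (G : SimpleGraph V) (v : V) : ℕ :=
  romanDom (G.induce {w | w ≠ v})

/-- The Roman bondage number of `G`. -/
noncomputable def romanBondage {V : Type*} [Fintype V] [DecidableEq V]
    (G : SimpleGraph V) : ℕ :=
  sInf {k | ∃ B : Finset (Sym2 V), ↑B ⊆ G.edgeSet ∧ B.card = k ∧
    romanDom (G.deleteEdges ↑B) ≠ romanDom G}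

/-- For any graph `G` and any edge `e` of `G`,
`γ_R(G) ≤ γ_R(G − e) ≤ γ_R(G) + 1`. -/
theorem stmt0 {V : Type*} [Fintype V] (G : SimpleGraph V) (e : Sym2 V)
    (he : e ∈ G.edgeSet) :
    romanDom G ≤ romanDom (G.deleteEdges {e}) ∧
      romanDom (G.deleteEdges {e}) ≤ romanDom G + 1 := by
  classical
  have hne : ∀ (H : SimpleGraph V), {w | ∃ f, IsRDF H f ∧ ∑ v, f v = w}.Nonempty := by
    intro H
    exact ⟨∑ _v : V, 1, fun _ => 1, ⟨fun _ => one_le_two, fun v h => by simp at h⟩, rfl⟩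
  constructor
  · obtain ⟨f, hf, hsum⟩ := Nat.sInf_mem (hne (G.deleteEdges {e}))
    unfold romanDom
    rw [← hsum]
    apply Nat.sInf_le
    refine ⟨f, ⟨hf.1, fun v hv => ?_⟩, rfl⟩
    obtain ⟨u, hadj, hu2⟩ := hf.2 v hv
    exact ⟨u, (SimpleGraph.deleteEdges_adj.1 hadj).1, hu2⟩
  · obtain ⟨f, hf, hsum⟩ := Nat.sInf_mem (hne G)
    by_cases hc : IsRDF (G.deleteEdges {e}) f
    · have h1 : romanDom (G.deleteEdges {e}) ≤ ∑ v, f v := by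
        unfold romanDom; exact Nat.sInf_le ⟨f, hc, rfl⟩
      rw [hsum] at h1
      exact h1.trans (Nat.le_succ _)
    · have hbad : ∃ w, f w = 0 ∧ ∀ u, ¬((G.deleteEdges {e}).Adj w u ∧ f u = 2) := by
        by_contra h
        push_neg at h
        exact hc ⟨hf.1, fun v hv => h v hv⟩
      obtain ⟨w, hw0, hw⟩ := hbad
      obtain ⟨x, hwx, hx2⟩ := hf.2 w hw0
      have hnadj : ¬ (G.deleteEdges {e}).Adj w x := fun h => hw x ⟨h, hx2⟩
      have hex : s(w, x) = e := by
        by_contra h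
        exact hnadj (SimpleGraph.deleteEdges_adj.2 ⟨hwx, by simpa using h⟩)
      set g := Function.update f w 1 with hg
      have hgRDF : IsRDF (G.deleteEdges {e}) g := by
        constructor
        · intro v
          by_cases hv : v = w
          · simp [hg, hv]
          · simp only [hg, Function.update_of_ne hv]
            exact hf.1 v
        · intro v hv
          have hvw : v ≠ w := by
            intro h; rw [h] at hv; simp [hg] at hv
          rw [hg, Function.update_of_ne hvw] at hv
          obtain ⟨u, hadj, hu2⟩ := hf.2 v hv
          have huw : u ≠ w := by intro h; rw [h, hw0] at hu2; exact absurd hu2 (by norm_num)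
          refine ⟨u, ?_, by rw [hg, Function.update_of_ne huw]; exact hu2⟩
          rw [SimpleGraph.deleteEdges_adj]
          refine ⟨hadj, ?_⟩
          intro hmem
          have heq : s(v, u) = e := by simpa using hmem
          rw [← hex] at heq
          have hwmem : w ∈ s(v, u) := by rw [heq]; simp [Sym2.mem_iff]
          rw [Sym2.mem_iff] at hwmem
          rcases hwmem with h | h
          · exact hvw h.symm
          · exact huw h.symm
      have hgsum : ∑ v, g v = ∑ v, f v + 1 := by
        rw [hg, Finset.sum_update_of_mem (Finset.mem_univ w)]
        have h2 : ∑ v ∈ Finset.univ \ {w}, f v = ∑ v, f v := by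
          rw [Finset.sum_subset Finset.sdiff_subset]
          intro y _ hy
          simp at hy
          exact hy ▸ hw0
        rw [h2, Nat.add_comm]
      have h1 : romanDom (G.deleteEdges {e}) ≤ ∑ v, g v := by
        unfold romanDom; exact Nat.sInf_le ⟨g, hgRDF, rfl⟩
      rw [hgsum, hsum] at h1
      exact h1
end

section
/- For any graph G of order at least 2 and any vertex u of G, γ_R(G) − 1 ≤ γ_R(G − u). -/
/-- For any graph `G` of order at least `2` and any vertex `u`,
`γ_R(G) − 1 ≤ γ_R(G − u)`. -/
theorem stmt1 {V : Type*} [Fintype V] [DecidableEq V] (G : SimpleGraph V)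
    (hn : 2 ≤ Fintype.card V) (u : V) :
    romanDom G - 1 ≤ romanDomDel G u := by
  -- the weight set for G - u is nonempty (constant 1 function)
  have hne : {w | ∃ f, IsRDF (G.induce {w | w ≠ u}) f ∧ ∑ v, f v = w}.Nonempty := by
    refine ⟨_, fun _ => 1, ⟨fun v => by norm_num, fun v h => by simp at h⟩, rfl⟩
  have hmem := Nat.sInf_mem hne
  obtain ⟨f, ⟨hf2, hf0⟩, hfw⟩ := hmem
  -- extend f to all of V by labeling u with 1
  set g : V → ℕ := fun x => if h : x = u then 1 else f ⟨x, h⟩ with hg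
  have hgRDF : IsRDF G g := by
    constructor
    · intro v
      by_cases h : v = u
      · simp [hg, h]
      · simpa [hg, h] using hf2 ⟨v, h⟩
    · intro v hv
      by_cases h : v = u
      · simp [hg, h] at hv
      · have : f ⟨v, h⟩ = 0 := by simpa [hg, h] using hv
        obtain ⟨⟨w, hw⟩, hadj, hw2⟩ := hf0 ⟨v, h⟩ this
        exact ⟨w, hadj, by simpa [hg, dif_neg (show w ≠ u from hw)] using hw2⟩
  have hsum : ∑ v, g v = (∑ v : {w | w ≠ u}, f v) + 1 := by
    rw [← Finset.sum_erase_add Finset.univ g (Finset.mem_univ u)]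
    congr 1
    · rw [Finset.sum_subtype (Finset.univ.erase u)
        (p := fun x => x ∈ {w | w ≠ u}) (by simp)]
      apply Finset.sum_congr rfl
      intro x _
      simp [hg, dif_neg (show (x : V) ≠ u from x.2)]
    · simp [hg]
  have h1 : romanDomDel G u = ∑ v : {w | w ≠ u}, f v := hfw.symm
  have hle : romanDom G ≤ romanDomDel G u + 1 := by
    rw [h1]
    exact Nat.sInf_le ⟨g, hgRDF, by rw [hsum]⟩
  exact Nat.sub_le_iff_le_add.mpr hle
end

section
/- Let G be a graph of order at least 2 and v a vertex with γ_R(G − v) > γ_R(G). Then for every minimum-weight Roman dominating function f = (V_0; V_1; V_2) on G, one has f(v) = 2 and v has at least 3 private neighbors in V_0, i.e. |pn[v, V_2] ∩ V_0| ≥ 3. -/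
/-- If `γ_R(G − v) > γ_R(G)` then every `γ_R`-function `f` on `G`
has `f v = 2` and `v` has at least `3` `V₂`-private neighbors in `V₀`. -/
theorem stmt2 {V : Type*} [Fintype V] [DecidableEq V] (G : SimpleGraph V)
    (hn : 2 ≤ Fintype.card V) (v : V) (hv : romanDom G < romanDomDel G v) :
    ∀ f : V → ℕ, IsRDF G f → ∑ w, f w = romanDom G →
      f v = 2 ∧
        3 ≤ Set.ncard {y | f y = 0 ∧
          {x | f x = 2} ∩ insert y (G.neighborSet y) = {v}} := by
  classical
  intro f hf hsum
  set P : Set V := {y | f y = 0 ∧ {x | f x = 2} ∩ insert y (G.neighborSet y) = {v}} with hP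
  have hPfin : P.Finite := Set.toFinite P
  have hvmem : ∀ y ∈ P, f v = 2 := by
    rintro y ⟨hy0, hyeq⟩
    have : v ∈ {x | f x = 2} ∩ insert y (G.neighborSet y) := by rw [hyeq]; exact rfl
    exact this.1
  have hvP : v ∉ P := by
    intro h
    have h2 := hvmem v h
    have h0 := h.1
    omega
  -- the modified function on G - v
  let g : {w : V // w ≠ v} → ℕ := fun w => if (w : V) ∈ P then 1 else f (w : V)
  have hg : IsRDF (G.induce {w | w ≠ v}) g := by
    constructor
    · intro w
      by_cases h : (w : V) ∈ P <;> simp [g, h, hf.1 (w : V)]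
    · intro w hw
      have hwP : (w : V) ∉ P := by
        intro h; simp [g, h] at hw
      have hw0 : f (w : V) = 0 := by simpa [g, hwP] using hw
      obtain ⟨u, hadj, hu2⟩ := hf.2 (w : V) hw0
      have hne : {x | f x = 2} ∩ insert (w : V) (G.neighborSet (w : V)) ≠ {v} := by
        intro h; exact hwP ⟨hw0, h⟩
      have hmem : u ∈ {x | f x = 2} ∩ insert (w : V) (G.neighborSet (w : V)) :=
        ⟨hu2, Set.mem_insert_of_mem _ hadj⟩
      obtain ⟨x, hx, hxv⟩ : ∃ x ∈ {x | f x = 2} ∩ insert (w : V) (G.neighborSet (w : V)), x ≠ v := by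
        by_contra hcon
        push_neg at hcon
        apply hne
        have hsub : {x | f x = 2} ∩ insert (w : V) (G.neighborSet (w : V)) ⊆ {v} := by
          intro x hx; exact hcon x hx
        rcases Set.subset_singleton_iff_eq.mp hsub with h | h
        · exact absurd (h ▸ hmem) (Set.notMem_empty u)
        · exact h
      have hxw : x ≠ (w : V) := by
        intro h
        have h2 : f (w : V) = 2 := by rw [h] at hx; exact hx.1
        omega
      have hxadj : G.Adj (w : V) x := by
        rcases hx.2 with h | h
        · exact absurd h hxw
        · exact h
      have hx2 : f x = 2 := hx.1
      have hxP : x ∉ P := by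
        intro h; have h0 : f x = 0 := h.1; omega
      refine ⟨⟨x, hxv⟩, ?_, ?_⟩
      · exact hxadj
      · simp [g, hxP, hx2]
  -- weight of g
  have hwsum : (∑ w : {w : V // w ≠ v}, g w) + f v = romanDom G + hPfin.toFinset.card := by
    have h1 : (∑ w : {w : V // w ≠ v}, g w) =
        ∑ w ∈ Finset.univ.filter (· ≠ v), (if w ∈ P then 1 else f w) := by
      exact (Finset.sum_subtype (Finset.univ.filter (· ≠ v)) (by simp)
        (fun w => if w ∈ P then 1 else f w)).symm
    have h2 : ∀ w ∈ Finset.univ.filter (· ≠ v),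
        (if w ∈ P then 1 else f w) = f w + (if w ∈ P then 1 else 0) := by
      intro w _
      by_cases h : w ∈ P
      · simp [h, h.1]
      · simp [h]
    rw [h1, Finset.sum_congr rfl h2, Finset.sum_add_distrib, ← Finset.card_filter]
    have h3 : ((Finset.univ.filter (· ≠ v)).filter (· ∈ P)) = hPfin.toFinset := by
      ext y
      simp only [Finset.mem_filter, Finset.mem_univ, true_and, Set.Finite.mem_toFinset]
      constructor
      · rintro ⟨_, h⟩; exact h
      · intro h
        refine ⟨?_, h⟩
        intro hy; rw [hy] at h; exact hvP h
    have h4 : Finset.univ.filter (· ≠ v) = Finset.univ.erase v := by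
      rw [Finset.filter_ne']
    rw [h3, h4]
    rw [← hsum]
    have h5 : ∑ w ∈ Finset.univ.erase v, f w + f v = ∑ w : V, f w := by
      rw [add_comm]
      exact Finset.add_sum_erase _ f (Finset.mem_univ v)
    omega
  have hle : romanDomDel G v ≤ ∑ w : {w : V // w ≠ v}, g w := by
    apply Nat.sInf_le
    exact ⟨g, hg, rfl⟩
  -- f v = 2
  have hfv2 : f v = 2 := by
    by_contra h
    have hPempty : P = ∅ := by
      ext y
      simp only [Set.mem_empty_iff_false, iff_false]
      intro hy; exact h (hvmem y hy)
    have : hPfin.toFinset.card = 0 := by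
      rw [Finset.card_eq_zero, Set.Finite.toFinset_eq_empty]
      exact hPempty
    omega
  refine ⟨hfv2, ?_⟩
  rw [Set.ncard_eq_toFinset_card _ hPfin]
  by_contra h
  push_neg at h
  omega
end

section
/- Let v be a vertex of a graph G of order at least 2. Then γ_R(G − v) < γ_R(G) if and only if there exists a minimum-weight Roman dominating function f = (V_0; V_1; V_2) on G with v ∈ V_1, i.e. f(v) = 1. -/
lemma rdf_set_nonempty {V : Type*} [Fintype V] (G : SimpleGraph V) :
    {w | ∃ f, IsRDF G f ∧ ∑ v, f v = w}.Nonempty :=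
  ⟨∑ _v : V, 1, fun _ => 1, ⟨fun _ => one_le_two, fun _ h => by simp at h⟩, rfl⟩

lemma romanDom_exists {V : Type*} [Fintype V] (G : SimpleGraph V) :
    ∃ f, IsRDF G f ∧ ∑ v, f v = romanDom G :=
  Nat.sInf_mem (rdf_set_nonempty G)

lemma romanDom_le {V : Type*} [Fintype V] (G : SimpleGraph V) {f : V → ℕ}
    (hf : IsRDF G f) : romanDom G ≤ ∑ v, f v :=
  Nat.sInf_le ⟨f, hf, rfl⟩

lemma sum_subtype_ne {V : Type*} [Fintype V] [DecidableEq V] (v : V) (f : V → ℕ) :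
    ∑ u : {w | w ≠ v}, f u.1 = ∑ x ∈ Finset.univ.erase v, f x := by
  rw [Finset.sum_subtype (Finset.univ.erase v) (p := fun w => w ∈ {w | w ≠ v})
    (fun x => by simp) f]

/-- `γ_R(G − v) < γ_R(G)` iff some `γ_R`-function on `G`
assigns `v` the label `1`. -/
theorem stmt3 {V : Type*} [Fintype V] [DecidableEq V] (G : SimpleGraph V)
    (hn : 2 ≤ Fintype.card V) (v : V) :
    romanDomDel G v < romanDom G ↔
      ∃ f : V → ℕ, IsRDF G f ∧ ∑ w, f w = romanDom G ∧ f v = 1 := by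
  constructor
  · intro hlt
    obtain ⟨g, hg, hgsum⟩ := romanDom_exists (G.induce {w | w ≠ v})
    set f : V → ℕ := fun w => if h : w ≠ v then g ⟨w, h⟩ else 1 with hfdef
    have hfv : f v = 1 := by simp [hfdef]
    have hfne : ∀ (w : V) (h : w ≠ v), f w = g ⟨w, h⟩ := fun w h => dif_pos h
    have hfRDF : IsRDF G f := by
      constructor
      · intro w
        by_cases h : w ≠ v
        · rw [hfne w h]; exact hg.1 _
        · simp only [hfdef, dif_neg h]; omega
      · intro w hw0
        by_cases h : w ≠ v
        · rw [hfne w h] at hw0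
          obtain ⟨u, hadj, hu2⟩ := hg.2 ⟨w, h⟩ hw0
          refine ⟨u.1, hadj, ?_⟩
          rw [hfne u.1 u.2]; exact hu2
        · rw [hfdef] at hw0; simp only [dif_neg h] at hw0; omega
    have hsum : ∑ w, f w = romanDomDel G v + 1 := by
      rw [← Finset.sum_erase_add _ _ (Finset.mem_univ v), hfv]
      congr 1
      rw [romanDomDel, ← hgsum, ← sum_subtype_ne v f]
      exact Finset.sum_congr rfl fun u _ => hfne u.1 u.2
    have h1 : romanDom G ≤ ∑ w, f w := romanDom_le G hfRDF
    have h2 : ∑ w, f w ≤ romanDom G := by rw [hsum]; omega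
    exact ⟨f, hfRDF, le_antisymm h2 h1, hfv⟩
  · rintro ⟨f, hf, hsum, hfv⟩
    set g : {w | w ≠ v} → ℕ := fun u => f u.1 with hgdef
    have hgRDF : IsRDF (G.induce {w | w ≠ v}) g := by
      constructor
      · intro u; exact hf.1 u.1
      · intro u hu0
        obtain ⟨x, hadj, hx2⟩ := hf.2 u.1 hu0
        have hx : x ≠ v := fun h => by rw [h, hfv] at hx2; omega
        exact ⟨⟨x, hx⟩, hadj, hx2⟩
    have hgsum : ∑ u, g u + 1 = romanDom G := by
      rw [← hsum, ← Finset.sum_erase_add _ _ (Finset.mem_univ v), hfv, hgdef,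
        sum_subtype_ne v f]
    have := romanDom_le _ hgRDF
    have : romanDomDel G v ≤ ∑ u, g u := this
    omega
end

section
/- For any connected graph G with at least 2 vertices, there exist vertices u and v at distance 1 or 2 from each other such that d(u) + d(v) ≤ 2·ad(G), where ad(G) = 2|E(G)|/|V(G)| is the average degree of G. -/
/-!
Put `f v = d(v) - ad(G)`, so that `∑ f = 0`, and suppose every pair at distance `1` or `2` has
`f u + f v > 0`. The set `A = {f ≤ 0}` is nonempty, every neighbour `b` of `a ∈ A` has
`f b > -f a ≥ 0`, and two vertices of `A` share no neighbour. Hence the neighbourhoods of the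
vertices of `A` are disjoint subsets of `Aᶜ`, and summing `f` over them gives
`∑_{Aᶜ} f > ∑_A (-f) = ∑_{Aᶜ} f`, a contradiction.
-/

namespace SimpleGraph

variable {V : Type*} [Fintype V] (G : SimpleGraph V) [DecidableRel G.Adj]

noncomputable def averageDegree : ℝ := 2 * G.edgeFinset.card / Fintype.card V

lemma sum_degree_sub_averageDegree : ∑ v, ((G.degree v : ℝ) - G.averageDegree) = 0 := by
  have hsum : ∑ v, (G.degree v : ℝ) = 2 * G.edgeFinset.card := by
    exact_mod_cast G.sum_degrees_eq_twice_card_edges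
  rw [Finset.sum_sub_distrib, hsum, Finset.sum_const, Finset.card_univ, nsmul_eq_mul,
    averageDegree]
  rcases Nat.eq_zero_or_pos (Fintype.card V) with hV | hV
  · have : IsEmpty V := Fintype.card_eq_zero_iff.mp hV
    simp_all
  · field_simp
    ring

omit [Fintype V] [DecidableRel G.Adj] in
lemma dist_eq_one_or_two_of_adj_of_adj {u v w : V} (huv : u ≠ v) (huw : G.Adj u w)
    (hwv : G.Adj w v) : G.dist u v = 1 ∨ G.dist u v = 2 := by
  by_cases h : G.Adj u v
  · exact Or.inl (dist_eq_one_iff_adj.mpr h)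
  · refine Or.inr ?_
    rw [dist, ENat.toNat_eq_iff two_ne_zero]
    exact edist_eq_two_iff.mpr ⟨huv, h, w, (G.mem_commonNeighbors).mpr ⟨huw, hwv.symm⟩⟩

variable [DecidableEq V]

lemma sum_sum_neighborFinset_le_sum_compl {A : Finset V} (f : V → ℝ)
    (hout : ∀ a ∈ A, ∀ b, G.Adj a b → b ∉ A)
    (hdisj : (A : Set V).PairwiseDisjoint fun a => G.neighborFinset a) (hf : ∀ b ∉ A, 0 ≤ f b) :
    ∑ a ∈ A, ∑ b ∈ G.neighborFinset a, f b ≤ ∑ b ∈ Aᶜ, f b := by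
  rw [← Finset.sum_biUnion hdisj]
  refine Finset.sum_le_sum_of_subset_of_nonneg ?_ fun b hb _ => hf b (Finset.mem_compl.mp hb)
  intro b hb
  obtain ⟨a, ha, hab⟩ := Finset.mem_biUnion.mp hb
  exact Finset.mem_compl.mpr (hout a ha b ((G.mem_neighborFinset a b).mp hab))

theorem exists_dist_eq_one_or_two_add_nonpos [Nonempty V] (hG : ∀ v, ∃ w, G.Adj v w)
    (f : V → ℝ) (hf : ∑ v, f v ≤ 0) :
    ∃ u v, (G.dist u v = 1 ∨ G.dist u v = 2) ∧ f u + f v ≤ 0 := by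
  by_contra! H
  set A := Finset.univ.filter fun a => f a ≤ 0
  have hA : A.Nonempty := by
    obtain ⟨a, -, ha⟩ := Finset.exists_le_of_sum_le Finset.univ_nonempty
      (hf.trans (Finset.sum_const_zero (s := Finset.univ)).ge)
    exact ⟨a, Finset.mem_filter.mpr ⟨Finset.mem_univ a, ha⟩⟩
  have hmemA : ∀ a, a ∈ A ↔ f a ≤ 0 := by simp [A]
  have hadj : ∀ a b, G.Adj a b → -f a < f b := fun a b h => by
    linarith [H a b (Or.inl (dist_eq_one_iff_adj.mpr h))]
  have hout : ∀ a ∈ A, ∀ b, G.Adj a b → b ∉ A := fun a ha b hab hb => by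
    linarith [hadj a b hab, (hmemA a).mp ha, (hmemA b).mp hb]
  have hdisj : (A : Set V).PairwiseDisjoint fun a => G.neighborFinset a := by
    intro a ha a' ha' hne
    refine Finset.disjoint_left.mpr fun b hb hb' => ?_
    rw [mem_neighborFinset] at hb hb'
    have := H a a' (G.dist_eq_one_or_two_of_adj_of_adj hne hb hb'.symm)
    linarith [(hmemA a).mp ha, (hmemA a').mp ha']
  have hlt : ∑ a ∈ A, -f a < ∑ a ∈ A, ∑ b ∈ G.neighborFinset a, f b := by
    refine Finset.sum_lt_sum_of_nonempty hA fun a ha => ?_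
    have hpos : ∀ b ∈ G.neighborFinset a, 0 ≤ f b := fun b hb => by
      linarith [hadj a b ((G.mem_neighborFinset a b).mp hb), (hmemA a).mp ha]
    obtain ⟨w, hw⟩ := hG a
    calc -f a < f w := hadj a w hw
      _ ≤ ∑ b ∈ G.neighborFinset a, f b :=
        Finset.single_le_sum hpos ((G.mem_neighborFinset a w).mpr hw)
  have hle := G.sum_sum_neighborFinset_le_sum_compl f hout hdisj fun b hb => by
    linarith [not_le.mp (mt (hmemA b).mpr hb)]
  have hsplit := Finset.sum_add_sum_compl A f
  rw [Finset.sum_neg_distrib] at hlt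
  linarith

end SimpleGraph

/-- In a connected graph with at least two vertices there are
vertices `u, v` at distance `1` or `2` with `d(u) + d(v) ≤ 2 · ad(G)`. -/
theorem stmt5 {V : Type*} [Fintype V] [DecidableEq V] (G : SimpleGraph V)
    [DecidableRel G.Adj] (hc : G.Connected) (hn : 2 ≤ Fintype.card V) :
    ∃ u v : V, (G.dist u v = 1 ∨ G.dist u v = 2) ∧
      (G.degree u + G.degree v : ℝ) ≤
        2 * (2 * G.edgeFinset.card / Fintype.card V) := by
  have : Nontrivial V := Fintype.one_lt_card_iff_nontrivial.mp hn
  obtain ⟨u, v, hdist, hle⟩ := G.exists_dist_eq_one_or_two_add_nonpos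
    hc.preconnected.exists_adj_of_nontrivial (fun v => G.degree v - G.averageDegree)
    G.sum_degree_sub_averageDegree.le
  exact ⟨u, v, hdist, by rw [SimpleGraph.averageDegree] at hle; linarith⟩
end

section
/- Let G be a graph of order at least 2 and x a vertex with γ_R(G − x) > γ_R(G). Then 1 ≤ γ_R(G − x) − γ_R(G) ≤ d(x) − 2. -/
/-- If `γ_R(G − x) > γ_R(G)` then
`1 ≤ γ_R(G − x) − γ_R(G) ≤ d(x) − 2`. -/
theorem stmt8 {V : Type*} [Fintype V] [DecidableEq V] (G : SimpleGraph V)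
    [DecidableRel G.Adj] (hn : 2 ≤ Fintype.card V) (x : V)
    (hx : romanDom G < romanDomDel G x) :
    1 ≤ romanDomDel G x - romanDom G ∧
      romanDomDel G x - romanDom G ≤ G.degree x - 2 := by
  classical
  have hne : {w | ∃ f, IsRDF G f ∧ ∑ v, f v = w}.Nonempty :=
    ⟨∑ _v : V, 2, ⟨fun _ : V => 2, ⟨fun v => le_refl 2, fun v h => by simp at h⟩, rfl⟩⟩
  obtain ⟨f, hf, hsum⟩ := Nat.sInf_mem hne
  clear hne
  have hsum' : ∑ v, f v = romanDom G := hsum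
  clear hsum
  have htot : f x + ∑ v ∈ Finset.univ.erase x, f v = romanDom G := by
    rw [← hsum']
    exact Finset.add_sum_erase _ f (Finset.mem_univ x)
  by_cases hfx : f x = 2
  · -- bump zero-neighbors of x
    have hg : IsRDF (G.induce {w | w ≠ x})
        (fun u => if f u.1 = 0 ∧ G.Adj x u.1 then 1 else f u.1) := by
      constructor
      · intro v
        show (if f v.1 = 0 ∧ G.Adj x v.1 then 1 else f v.1) ≤ 2
        by_cases h1 : f v.1 = 0 ∧ G.Adj x v.1
        · rw [if_pos h1]; omega
        · rw [if_neg h1]; exact hf.1 v.1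
      · intro v hv
        replace hv : (if f v.1 = 0 ∧ G.Adj x v.1 then 1 else f v.1) = 0 := hv
        by_cases h1 : f v.1 = 0 ∧ G.Adj x v.1
        · rw [if_pos h1] at hv; omega
        · rw [if_neg h1] at hv
          obtain ⟨w, hw, hw2⟩ := hf.2 v.1 hv
          have hwx : w ≠ x := by
            rintro rfl
            exact h1 ⟨hv, hw.symm⟩
          refine ⟨⟨w, hwx⟩, ?_, ?_⟩
          · simpa using hw
          · show (if f w = 0 ∧ G.Adj x w then 1 else f w) = 2
            have hne2 : ¬ (f w = 0 ∧ G.Adj x w) := by intro h; omega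
            rw [if_neg hne2]; exact hw2
    have h1 : romanDomDel G x ≤
        ∑ u : {w : V | w ≠ x}, (if f u.1 = 0 ∧ G.Adj x u.1 then 1 else f u.1) :=
      Nat.sInf_le ⟨_, hg, rfl⟩
    have hsp : (∑ u : {w : V | w ≠ x}, (if f u.1 = 0 ∧ G.Adj x u.1 then 1 else f u.1))
        = ∑ v ∈ Finset.univ.erase x, (if f v = 0 ∧ G.Adj x v then 1 else f v) :=
      (Finset.sum_subtype (p := fun w => w ∈ {w : V | w ≠ x}) (Finset.univ.erase x)
        (fun w => by simp) (fun v => if f v = 0 ∧ G.Adj x v then 1 else f v)).symm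
    have hdeg : G.degree x = ∑ v ∈ Finset.univ, (if G.Adj x v then 1 else 0) := by
      rw [SimpleGraph.degree, SimpleGraph.neighborFinset_eq_filter, Finset.card_filter]
    have h2 : (∑ v ∈ Finset.univ.erase x, (if f v = 0 ∧ G.Adj x v then 1 else f v))
        ≤ (∑ v ∈ Finset.univ.erase x, f v) + G.degree x := by
      rw [hdeg]
      calc (∑ v ∈ Finset.univ.erase x, if f v = 0 ∧ G.Adj x v then 1 else f v)
          ≤ ∑ v ∈ Finset.univ.erase x, (f v + if G.Adj x v then 1 else 0) := by
            apply Finset.sum_le_sum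
            intro i _
            by_cases h1 : f i = 0 ∧ G.Adj x i
            · rw [if_pos h1, if_pos h1.2]; omega
            · rw [if_neg h1]
              by_cases h2 : G.Adj x i
              · rw [if_pos h2]; omega
              · rw [if_neg h2]; omega
        _ = (∑ v ∈ Finset.univ.erase x, f v)
            + ∑ v ∈ Finset.univ.erase x, (if G.Adj x v then 1 else 0) :=
            Finset.sum_add_distrib
        _ ≤ (∑ v ∈ Finset.univ.erase x, f v)
            + ∑ v ∈ Finset.univ, (if G.Adj x v then 1 else 0) :=
            Nat.add_le_add_left
              (Finset.sum_le_sum_of_subset (Finset.erase_subset _ _)) _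
    rw [hsp] at h1
    omega
  · -- restriction is already an RDF
    have hg : IsRDF (G.induce {w | w ≠ x}) (fun u => f u.1) := by
      constructor
      · intro v; exact hf.1 v.1
      · intro v hv
        obtain ⟨w, hw, hw2⟩ := hf.2 v.1 hv
        have hwx : w ≠ x := by rintro rfl; exact hfx hw2
        refine ⟨⟨w, hwx⟩, ?_, hw2⟩
        simpa using hw
    have h1 : romanDomDel G x ≤ ∑ u : {w : V | w ≠ x}, f u.1 :=
      Nat.sInf_le ⟨_, hg, rfl⟩
    have h2 : (∑ u : {w : V | w ≠ x}, f u.1) = ∑ v ∈ Finset.univ.erase x, f v :=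
      (Finset.sum_subtype (p := fun w => w ∈ {w : V | w ≠ x}) (Finset.univ.erase x)
        (fun w => by simp) f).symm
    omega
end

section
/- Let G be a graph of order at least 2 and x a vertex with γ_R(G − x) > γ_R(G). Set p = γ_R(G − x) − γ_R(G). Then for every set S of edges incident to x with |S| ≥ d(x) − p, we have γ_R(G − S) > γ_R(G). -/
/-!
Suppose `γ_R(G − S) ≤ γ_R(G)` and take a minimum Roman dominating function `f` of `G − S`.
If `f x ≠ 2`, then `f` restricted to `G − x` is still Roman dominating, so
`γ_R(G − x) ≤ γ_R(G)`. If `f x = 2`, relabel with `1` every `0`-vertex adjacent to `x` in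
`G − S`; there are at most `d(x) − |S| ≤ p` of them, so
`γ_R(G − x) ≤ γ_R(G) − 2 + p`. Both contradict `γ_R(G − x) = γ_R(G) + p`.
-/

open Finset SimpleGraph

lemma SimpleGraph.degree_deleteEdges_add_card {V : Type*} [Fintype V] [DecidableEq V]
    {G : SimpleGraph V} [DecidableRel G.Adj] {x : V} {S : Finset (Sym2 V)}
    (hS : ↑S ⊆ G.incidenceSet x) :
    (G.deleteEdges ↑S).degree x + #S = G.degree x := by
  have hinc : (G.deleteEdges ↑S).incidenceFinset x = G.incidenceFinset x \ S := by
    ext e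
    simp [incidenceSet, edgeSet_deleteEdges, and_right_comm]
  rw [← card_incidenceFinset_eq_degree, ← card_incidenceFinset_eq_degree, hinc,
    card_sdiff_add_card_eq_card fun e he => by simpa using hS he]

section

variable {V : Type*} {G H : SimpleGraph V} {f : V → ℕ}

lemma IsRDF.mono (hHG : H ≤ G) (hf : IsRDF H f) : IsRDF G f :=
  ⟨hf.1, fun v hv => (hf.2 v hv).imp fun _ hu => ⟨hHG hu.1, hu.2⟩⟩

lemma IsRDF.induce (hf : IsRDF G f) {s : Set V} (hs : ∀ v, f v = 2 → v ∈ s) :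
    IsRDF (G.induce s) (fun v => f v) := by
  refine ⟨fun v => hf.1 v, fun v hv => ?_⟩
  obtain ⟨u, hvu, hu⟩ := hf.2 v hv
  exact ⟨⟨u, hs u hu⟩, hvu, hu⟩

def raiseNeighbors (G : SimpleGraph V) [DecidableRel G.Adj] (f : V → ℕ) (x v : V) : ℕ :=
  if f v = 0 ∧ G.Adj x v then 1 else f v

lemma raiseNeighbors_self [DecidableRel G.Adj] (x : V) : raiseNeighbors G f x x = f x := by
  simp [raiseNeighbors]

lemma IsRDF.induce_raiseNeighbors [DecidableRel G.Adj] (hf : IsRDF G f) (x : V) :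
    IsRDF (G.induce {w | w ≠ x}) (fun v => raiseNeighbors G f x v) := by
  refine ⟨fun v => ?_, fun v hv => ?_⟩
  · change raiseNeighbors G f x v ≤ 2
    unfold raiseNeighbors
    split_ifs
    exacts [one_le_two, hf.1 v]
  · change raiseNeighbors G f x v = 0 at hv
    unfold raiseNeighbors at hv
    split_ifs at hv with hxv
    obtain ⟨u, hvu, hu⟩ := hf.2 v hv
    have hux : u ≠ x := by
      rintro rfl
      exact hxv ⟨hv, hvu.symm⟩
    exact ⟨⟨u, hux⟩, hvu, by simp [raiseNeighbors, hu]⟩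

variable [Fintype V]

lemma sum_raiseNeighbors_le [DecidableRel G.Adj] (x : V) :
    ∑ v, raiseNeighbors G f x v ≤ ∑ v, f v + G.degree x := by
  calc ∑ v, raiseNeighbors G f x v ≤ ∑ v, (f v + if G.Adj x v then 1 else 0) := by
        gcongr with v
        unfold raiseNeighbors
        split_ifs with h h' <;> first | omega | exact absurd h.2 h'
    _ = ∑ v, f v + G.degree x := by
        rw [sum_add_distrib, sum_boole, Nat.cast_id, ← card_neighborFinset_eq_degree,
          neighborFinset_eq_filter]

lemma romanDom_le_sum (hf : IsRDF G f) : romanDom G ≤ ∑ v, f v :=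
  Nat.sInf_le ⟨f, hf, rfl⟩

lemma exists_isRDF_sum_eq_romanDom (G : SimpleGraph V) :
    ∃ f, IsRDF G f ∧ ∑ v, f v = romanDom G :=
  Nat.sInf_mem (s := {w | ∃ f, IsRDF G f ∧ ∑ v, f v = w})
    ⟨_, fun _ => 2, ⟨fun _ => le_rfl, fun _ h => absurd h two_ne_zero⟩, rfl⟩

variable [DecidableEq V] {x : V}

lemma romanDomDel_add_le_sum (hf : IsRDF (G.induce {w | w ≠ x}) (fun v => f v)) :
    romanDomDel G x + f x ≤ ∑ v, f v :=
  calc romanDomDel G x + f x ≤ ∑ v ∈ univ.erase x, f v + f x := by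
        gcongr
        rw [sum_subtype (univ.erase x) (p := (· ∈ {w | w ≠ x})) (by simp)]
        exact romanDom_le_sum hf
    _ = ∑ v, f v := sum_erase_add _ _ (mem_univ x)

lemma romanDomDel_add_le_of_isRDF_of_ne_two (hHG : H ≤ G) (hf : IsRDF H f) (hfx : f x ≠ 2) :
    romanDomDel G x + f x ≤ ∑ v, f v :=
  romanDomDel_add_le_sum <| (hf.mono hHG).induce fun _ hv hvx => hfx (hvx ▸ hv)

lemma romanDomDel_add_le_of_isRDF [DecidableRel H.Adj] (hHG : H ≤ G) (hf : IsRDF H f) :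
    romanDomDel G x + f x ≤ ∑ v, f v + H.degree x := by
  have hraise : IsRDF (G.induce {w | w ≠ x}) (fun v => raiseNeighbors H f x v) :=
    (hf.induce_raiseNeighbors x).mono fun _ _ h => hHG h
  calc romanDomDel G x + f x = romanDomDel G x + raiseNeighbors H f x x := by
        rw [raiseNeighbors_self]
    _ ≤ ∑ v, raiseNeighbors H f x v := romanDomDel_add_le_sum hraise
    _ ≤ ∑ v, f v + H.degree x := sum_raiseNeighbors_le x

end

theorem stmt9_general {V : Type*} [Fintype V] [DecidableEq V] (G : SimpleGraph V)
    [DecidableRel G.Adj] (x : V)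
    (hx : romanDom G < romanDomDel G x)
    (S : Finset (Sym2 V)) (hS : ↑S ⊆ G.edgeSet) (hinc : ∀ e ∈ S, x ∈ e)
    (hcard : G.degree x - (romanDomDel G x - romanDom G) ≤ S.card) :
    romanDom G < romanDom (G.deleteEdges ↑S) := by
  by_contra! hle
  obtain ⟨f, hf, hfsum⟩ := exists_isRDF_sum_eq_romanDom (G.deleteEdges ↑S)
  have hdeg := degree_deleteEdges_add_card (x := x) fun e he => ⟨hS he, hinc e he⟩
  by_cases hfx : f x = 2
  · have hdel := romanDomDel_add_le_of_isRDF (x := x) (G.deleteEdges_le ↑S) hf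
    omega
  · have hdel := romanDomDel_add_le_of_isRDF_of_ne_two (G.deleteEdges_le ↑S) hf hfx
    omega

/-- If `γ_R(G − x) > γ_R(G)` and `p = γ_R(G − x) − γ_R(G)`, then
for every set `S` of edges incident to `x` with `|S| ≥ d(x) − p`,
`γ_R(G − S) > γ_R(G)`. -/
theorem stmt9 {V : Type*} [Fintype V] [DecidableEq V] (G : SimpleGraph V)
    [DecidableRel G.Adj] (hn : 2 ≤ Fintype.card V) (x : V)
    (hx : romanDom G < romanDomDel G x)
    (S : Finset (Sym2 V)) (hS : ↑S ⊆ G.edgeSet) (hinc : ∀ e ∈ S, x ∈ e)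
    (hcard : G.degree x - (romanDomDel G x - romanDom G) ≤ S.card) :
    romanDom G < romanDom (G.deleteEdges ↑S) :=
  stmt9_general G x hx S hS hinc hcard
end

section
/- Let G be a connected graph with maximum degree Δ(G) satisfying 2 ≤ Δ(G) ≤ 6. Then the Roman bondage number satisfies b_R(G) ≤ 3Δ(G) − 3 ≤ 15. -/
/-- If `G` is connected with `2 ≤ Δ(G) ≤ 6`, then
`b_R(G) ≤ 3Δ(G) − 3 ≤ 15`. -/
theorem stmt13 {V : Type*} [Fintype V] [DecidableEq V] (G : SimpleGraph V)
    [DecidableRel G.Adj] (hc : G.Connected) (h2 : 2 ≤ G.maxDegree)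
    (h6 : G.maxDegree ≤ 6) :
    romanBondage G ≤ 3 * G.maxDegree - 3 ∧ 3 * G.maxDegree - 3 ≤ 15 := by
  refine ⟨?_, by omega⟩
  have : Nonempty V := hc.nonempty
  obtain ⟨v, hv⟩ := G.exists_maximal_degree_vertex
  have hdeg : 2 ≤ G.degree v := hv ▸ h2
  obtain ⟨u, hu, w, hw, huw⟩ := Finset.one_lt_card.mp (by
    rw [show (G.neighborFinset v).card = G.degree v from rfl]; omega)
  rw [SimpleGraph.mem_neighborFinset] at hu hw
  have hvu : G.Adj v u := hu
  have hvw : G.Adj v w := hw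
  have huv : u ≠ v := hvu.ne'
  have hwv : w ≠ v := hvw.ne'
  set e : Sym2 V := s(u, v) with he
  set U : Finset (Sym2 V) :=
    G.incidenceFinset u ∪ G.incidenceFinset v ∪ G.incidenceFinset w with hU
  set B : Finset (Sym2 V) := U.erase e with hBdef
  have memIncidence : ∀ a x : V, G.Adj a x → s(a, x) ∈ G.incidenceFinset a := by
    intro a x hax
    rw [SimpleGraph.mem_incidenceFinset]
    exact G.mk'_mem_incidenceSet_left_iff.mpr hax
  -- B consists of edges of G
  have hsub : (↑B : Set (Sym2 V)) ⊆ G.edgeSet := by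
    intro x hx
    simp only [hBdef, Finset.coe_erase, Set.mem_diff] at hx
    have hxU := hx.1
    simp only [hU, Finset.coe_union, Set.mem_union] at hxU
    rcases hxU with (h | h) | h <;>
      · rw [Finset.mem_coe, SimpleGraph.mem_incidenceFinset] at h
        exact G.incidenceSet_subset _ h
  -- cardinality bound
  have hcard : B.card ≤ 3 * G.maxDegree - 3 := by
    have hBsub : B ⊆ (G.incidenceFinset u).erase e ∪ (G.incidenceFinset v).erase e ∪
        (G.incidenceFinset w).erase s(v, w) := by
      intro x hx
      rw [hBdef, Finset.mem_erase] at hx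
      obtain ⟨hxe, hxU⟩ := hx
      rw [hU, Finset.mem_union, Finset.mem_union] at hxU
      rcases hxU with (h | h) | h
      · exact Finset.mem_union_left _ (Finset.mem_union_left _ (Finset.mem_erase.mpr ⟨hxe, h⟩))
      · exact Finset.mem_union_left _ (Finset.mem_union_right _ (Finset.mem_erase.mpr ⟨hxe, h⟩))
      · by_cases hx2 : x = s(v, w)
        · refine Finset.mem_union_left _ (Finset.mem_union_right _ (Finset.mem_erase.mpr
            ⟨hxe, ?_⟩))
          rw [hx2]
          exact memIncidence v w hvw
        · exact Finset.mem_union_right _ (Finset.mem_erase.mpr ⟨hx2, h⟩)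
    have h1 : ((G.incidenceFinset u).erase e).card = G.degree u - 1 := by
      rw [Finset.card_erase_of_mem (by rw [he]; exact memIncidence u v hvu.symm),
        SimpleGraph.card_incidenceFinset_eq_degree]
    have h2' : ((G.incidenceFinset v).erase e).card = G.degree v - 1 := by
      rw [Finset.card_erase_of_mem (by rw [he, Sym2.eq_swap]; exact memIncidence v u hvu),
        SimpleGraph.card_incidenceFinset_eq_degree]
    have h3 : ((G.incidenceFinset w).erase s(v, w)).card = G.degree w - 1 := by
      rw [Finset.card_erase_of_mem (by rw [Sym2.eq_swap]; exact memIncidence w v hvw.symm),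
        SimpleGraph.card_incidenceFinset_eq_degree]
    have du : G.degree u ≤ G.maxDegree := G.degree_le_maxDegree u
    have dv : G.degree v ≤ G.maxDegree := G.degree_le_maxDegree v
    have dw : G.degree w ≤ G.maxDegree := G.degree_le_maxDegree w
    calc B.card ≤ _ := Finset.card_le_card hBsub
      _ ≤ ((G.incidenceFinset u).erase e ∪ (G.incidenceFinset v).erase e).card +
          ((G.incidenceFinset w).erase s(v, w)).card := Finset.card_union_le _ _
      _ ≤ ((G.incidenceFinset u).erase e).card + ((G.incidenceFinset v).erase e).card +
          ((G.incidenceFinset w).erase s(v, w)).card := by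
            exact Nat.add_le_add_right (Finset.card_union_le _ _) _
      _ ≤ 3 * G.maxDegree - 3 := by rw [h1, h2', h3]; omega
  -- the deleted graph
  set H := G.deleteEdges (↑B) with hH
  -- key structural fact: any surviving edge at u, v, or w is the edge uv
  have key : ∀ a x : V, H.Adj a x → (a = u ∨ a = v ∨ a = w) → s(a, x) = e := by
    intro a x hax ha
    rw [hH, SimpleGraph.deleteEdges_adj] at hax
    obtain ⟨hGax, hnB⟩ := hax
    have hmemU : s(a, x) ∈ U := by
      rw [hU, Finset.mem_union, Finset.mem_union]
      rcases ha with rfl | rfl | rfl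
      · exact Or.inl (Or.inl (memIncidence a x hGax))
      · exact Or.inl (Or.inr (memIncidence a x hGax))
      · exact Or.inr (memIncidence a x hGax)
    by_contra hne
    exact hnB (by rw [hBdef]; exact Finset.mem_erase.mpr ⟨hne, hmemU⟩)
  have keyu : ∀ x, H.Adj u x → x = v := by
    intro x hx
    have := key u x hx (Or.inl rfl)
    rw [he, Sym2.eq_iff] at this
    rcases this with ⟨_, rfl⟩ | ⟨h1, _⟩
    · rfl
    · exact absurd h1 huv
  have keyv : ∀ x, H.Adj v x → x = u := by
    intro x hx
    have := key v x hx (Or.inr (Or.inl rfl))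
    rw [he, Sym2.eq_iff] at this
    rcases this with ⟨h1, _⟩ | ⟨_, rfl⟩
    · exact absurd h1.symm huv
    · rfl
  have keyw : ∀ x, ¬ H.Adj w x := by
    intro x hx
    have := key w x hx (Or.inr (Or.inr rfl))
    rw [he, Sym2.eq_iff] at this
    rcases this with ⟨h1, _⟩ | ⟨h1, _⟩
    · exact huw h1.symm
    · exact hwv h1
  -- the set defining `romanDom H` is nonempty, take optimal RDF f of H
  have hne : {x | ∃ f, IsRDF H f ∧ ∑ y, f y = x}.Nonempty :=
    ⟨∑ _y : V, 1, fun _ => 1, ⟨fun _ => one_le_two, fun _ h => absurd h one_ne_zero⟩, rfl⟩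
  obtain ⟨f, hf, hfsum⟩ := Nat.sInf_mem hne
  -- lower bounds on f on the triple
  have hfw : 1 ≤ f w := by
    rcases Nat.eq_zero_or_pos (f w) with h0 | h; swap
    · exact h
    obtain ⟨y, hy, _⟩ := hf.2 w h0
    exact absurd hy (keyw y)
  have hfuv : 2 ≤ f u + f v := by
    rcases Nat.eq_zero_or_pos (f u) with h0 | hu1
    · obtain ⟨y, hy, hy2⟩ := hf.2 u h0
      have := keyu y hy
      subst this
      exact hy2 ▸ Nat.le_add_left 2 (f u)
    rcases Nat.eq_zero_or_pos (f v) with h0 | hv1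
    · obtain ⟨y, hy, hy2⟩ := hf.2 v h0
      have := keyv y hy
      subst this
      exact hy2 ▸ Nat.le_add_right 2 (f v)
    exact Nat.add_le_add hu1 hv1
  -- the improved RDF on G
  set g : V → ℕ := fun x => if x = u ∨ x = w then 0 else if x = v then 2 else f x with hg
  have hgval : ∀ x, x ≠ u → x ≠ w → x ≠ v → g x = f x := by
    intro x h1 h2 h3
    simp [hg, h1, h2, h3]
  have hgu : g u = 0 := by simp [hg]
  have hgw : g w = 0 := by simp [hg]
  have hgv : g v = 2 := by simp [hg, huv.symm, hwv.symm]
  have hHle : ∀ a b, H.Adj a b → G.Adj a b := by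
    intro a b hab
    rw [hH, SimpleGraph.deleteEdges_adj] at hab
    exact hab.1
  have hgRDF : IsRDF G g := by
    constructor
    · intro x
      by_cases h1 : x = u ∨ x = w
      · simp [hg, h1]
      · by_cases h2 : x = v
        · rw [h2, hgv]
        · simp only [hg, if_neg h1, if_neg h2]; exact hf.1 x
    · intro x hx0
      by_cases h1 : x = u ∨ x = w
      · rcases h1 with rfl | rfl
        · exact ⟨v, hvu.symm, hgv⟩
        · exact ⟨v, hvw.symm, hgv⟩
      · by_cases h2 : x = v
        · rw [h2, hgv] at hx0; exact absurd hx0 (by norm_num)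
        · push_neg at h1
          rw [hgval x h1.1 h1.2 h2] at hx0
          obtain ⟨y, hy, hy2⟩ := hf.2 x hx0
          have hyu : y ≠ u := by
            rintro rfl
            have := keyu x hy.symm
            exact h2 this
          have hyv : y ≠ v := by
            rintro rfl
            have := keyv x hy.symm
            exact h1.1 this
          have hyw : y ≠ w := by
            rintro rfl
            exact keyw x hy.symm
          exact ⟨y, hHle x y hy, by rw [hgval y hyu hyw hyv]; exact hy2⟩
  -- sum bookkeeping
  set T : Finset V := {u, v, w} with hT
  have hnd1 : u ∉ ({v, w} : Finset V) := by
    simp [huv, huw]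
  have hnd2 : v ∉ ({w} : Finset V) := by simp [hwv.symm]
  have hsumTf : ∑ x ∈ T, f x = f u + (f v + f w) := by
    rw [hT, Finset.sum_insert hnd1, Finset.sum_insert hnd2, Finset.sum_singleton]
  have hsumTg : ∑ x ∈ T, g x = 2 := by
    rw [hT, Finset.sum_insert hnd1, Finset.sum_insert hnd2, Finset.sum_singleton,
      hgu, hgv, hgw]
    rfl
  have hsplitf : ∑ x ∈ Finset.univ \ T, f x + ∑ x ∈ T, f x = ∑ x, f x :=
    Finset.sum_sdiff (Finset.subset_univ T)
  have hsplitg : ∑ x ∈ Finset.univ \ T, g x + ∑ x ∈ T, g x = ∑ x, g x :=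
    Finset.sum_sdiff (Finset.subset_univ T)
  have hrest : ∑ x ∈ Finset.univ \ T, g x = ∑ x ∈ Finset.univ \ T, f x := by
    apply Finset.sum_congr rfl
    intro x hx
    rw [Finset.mem_sdiff, hT] at hx
    simp only [Finset.mem_insert, Finset.mem_singleton, not_or] at hx
    exact hgval x hx.2.1 hx.2.2.2 hx.2.2.1
  -- romanDom G < romanDom H
  have hlt : romanDom G < romanDom H := by
    have hG_le : romanDom G ≤ ∑ x, g x := Nat.sInf_le ⟨g, hgRDF, rfl⟩
    have : ∑ x, g x < ∑ x, f x := by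
      rw [← hsplitf, ← hsplitg, hrest, hsumTf, hsumTg]
      have h3 : 2 < f u + (f v + f w) := by
        have h4 := Nat.add_le_add hfuv hfw
        rw [Nat.add_assoc] at h4
        exact h4
      exact Nat.add_lt_add_left h3 _
    calc romanDom G ≤ ∑ x, g x := hG_le
      _ < ∑ x, f x := this
      _ = romanDom H := hfsum
  -- conclude
  have hmem : B.card ∈ {k | ∃ B' : Finset (Sym2 V), ↑B' ⊆ G.edgeSet ∧ B'.card = k ∧
      romanDom (G.deleteEdges ↑B') ≠ romanDom G} :=
    ⟨B, hsub, rfl, by rw [← hH]; exact hlt.ne'⟩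
  exact le_trans (Nat.sInf_le hmem) hcard
end

section
/- Let G be a graph containing a vertex u and three distinct vertices v_1, v_2, v_3 of degree at most 5, all adjacent to u. Then the Roman bondage number satisfies b_R(G) ≤ d(v_1) + d(v_2) + d(v_3) ≤ 15. -/
/-- If a vertex `u` has three distinct neighbors `v₁, v₂, v₃`
of degree at most `5`, then `b_R(G) ≤ d(v₁) + d(v₂) + d(v₃) ≤ 15`. -/
theorem stmt14 {V : Type*} [Fintype V] [DecidableEq V] (G : SimpleGraph V)
    [DecidableRel G.Adj] (u v₁ v₂ v₃ : V)
    (h12 : v₁ ≠ v₂) (h13 : v₁ ≠ v₃) (h23 : v₂ ≠ v₃)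
    (ha1 : G.Adj u v₁) (ha2 : G.Adj u v₂) (ha3 : G.Adj u v₃)
    (hd1 : G.degree v₁ ≤ 5) (hd2 : G.degree v₂ ≤ 5) (hd3 : G.degree v₃ ≤ 5) :
    romanBondage G ≤ G.degree v₁ + G.degree v₂ + G.degree v₃ ∧
      G.degree v₁ + G.degree v₂ + G.degree v₃ ≤ 15 := by
  refine ⟨?_, by omega⟩
  classical
  set B : Finset (Sym2 V) :=
    G.incidenceFinset v₁ ∪ G.incidenceFinset v₂ ∪ G.incidenceFinset v₃ with hB
  have hBsub : ↑B ⊆ G.edgeSet := by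
    intro e he
    simp only [hB, Finset.coe_union, Set.mem_union, Finset.mem_coe,
      SimpleGraph.mem_incidenceFinset] at he
    rcases he with (h | h) | h <;> exact h.1
  set G' := G.deleteEdges ↑B with hG'
  have hiso : ∀ w x, (w = v₁ ∨ w = v₂ ∨ w = v₃) → ¬ G'.Adj w x := by
    intro w x hw hadj
    rw [hG', SimpleGraph.deleteEdges_adj] at hadj
    apply hadj.2
    simp only [hB, Finset.coe_union, Set.mem_union, Finset.mem_coe,
      SimpleGraph.mem_incidenceFinset, SimpleGraph.mk'_mem_incidenceSet_iff]
    rcases hw with h | h | h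
    · exact Or.inl (Or.inl ⟨hadj.1, Or.inl h.symm⟩)
    · exact Or.inl (Or.inr ⟨hadj.1, Or.inl h.symm⟩)
    · exact Or.inr ⟨hadj.1, Or.inl h.symm⟩
  have hne : romanDom G' ≠ romanDom G := by
    have hnonempty : {w | ∃ f, IsRDF G' f ∧ ∑ v, f v = w}.Nonempty := by
      refine ⟨∑ v : V, (1 : ℕ), fun _ => 1, ⟨fun _ => one_le_two, fun v hv => absurd hv one_ne_zero⟩, rfl⟩
    obtain ⟨f, hf, hfsum⟩ : ∃ f, IsRDF G' f ∧ ∑ v, f v = romanDom G' :=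
      Nat.sInf_mem hnonempty
    -- each vᵢ gets label ≥ 1 under f
    have hone : ∀ w, (w = v₁ ∨ w = v₂ ∨ w = v₃) → 1 ≤ f w := by
      intro w hw
      rcases Nat.eq_zero_or_pos (f w) with h0 | h1
      · obtain ⟨x, hx, _⟩ := hf.2 w h0
        exact absurd hx (hiso w x hw)
      · exact h1
    have hu1 : u ≠ v₁ := ha1.ne
    have hu2 : u ≠ v₂ := ha2.ne
    have hu3 : u ≠ v₃ := ha3.ne
    -- the modified function on G
    obtain ⟨g, hgu, hgv, hgo⟩ : ∃ g : V → ℕ, g u = 2 ∧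
        (∀ w, (w = v₁ ∨ w = v₂ ∨ w = v₃) → g w = 0) ∧
        (∀ w, w ≠ u → ¬(w = v₁ ∨ w = v₂ ∨ w = v₃) → g w = f w) := by
      refine ⟨fun w => if w = u then 2 else if w = v₁ ∨ w = v₂ ∨ w = v₃ then 0 else f w,
        if_pos rfl, ?_, ?_⟩
      · intro w hw
        have hwu : w ≠ u := by
          rintro rfl
          rcases hw with h | h | h
          exacts [hu1 h, hu2 h, hu3 h]
        simp only [if_neg hwu, if_pos hw]
      · intro w hwu hwv
        simp only [if_neg hwu, if_neg hwv]
    have hgRDF : IsRDF G g := by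
      constructor
      · intro w
        by_cases hwu : w = u
        · rw [hwu, hgu]
        by_cases hwv : w = v₁ ∨ w = v₂ ∨ w = v₃
        · rw [hgv w hwv]; omega
        · rw [hgo w hwu hwv]; exact hf.1 w
      · intro w hw
        by_cases hwu : w = u
        · rw [hwu, hgu] at hw; omega
        by_cases hwv : w = v₁ ∨ w = v₂ ∨ w = v₃
        · rcases hwv with h | h | h
          · exact ⟨u, by rw [h]; exact ha1.symm, hgu⟩
          · exact ⟨u, by rw [h]; exact ha2.symm, hgu⟩
          · exact ⟨u, by rw [h]; exact ha3.symm, hgu⟩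
        · rw [hgo w hwu hwv] at hw
          obtain ⟨x, hx, hx2⟩ := hf.2 w hw
          have hxG : G.Adj w x := by
            rw [hG', SimpleGraph.deleteEdges_adj] at hx
            exact hx.1
          refine ⟨x, hxG, ?_⟩
          have hxne : ¬ (x = v₁ ∨ x = v₂ ∨ x = v₃) := fun hxv => hiso x w hxv hx.symm
          by_cases hxu : x = u
          · rw [hxu, hgu]
          · rw [hgo x hxu hxne]; exact hx2
    -- weight of g is strictly less than weight of f
    have hS : (∑ v, g v) < ∑ v, f v := by
      have hgS : ∑ v ∈ ({u, v₁, v₂, v₃} : Finset V), g v = 2 := by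
        rw [Finset.sum_insert (by simp [hu1, hu2, hu3]),
          Finset.sum_insert (by simp [h12, h13]),
          Finset.sum_insert (by simp [h23]), Finset.sum_singleton,
          hgu, hgv v₁ (Or.inl rfl), hgv v₂ (Or.inr (Or.inl rfl)),
          hgv v₃ (Or.inr (Or.inr rfl))]
        norm_num
      have hfS : 3 ≤ ∑ v ∈ ({u, v₁, v₂, v₃} : Finset V), f v := by
        rw [Finset.sum_insert (by simp [hu1, hu2, hu3]),
          Finset.sum_insert (by simp [h12, h13]),
          Finset.sum_insert (by simp [h23]), Finset.sum_singleton]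
        have := hone v₁ (Or.inl rfl)
        have := hone v₂ (Or.inr (Or.inl rfl))
        have := hone v₃ (Or.inr (Or.inr rfl))
        omega
      have hcompl : ∑ v ∈ ({u, v₁, v₂, v₃} : Finset V)ᶜ, g v
          = ∑ v ∈ ({u, v₁, v₂, v₃} : Finset V)ᶜ, f v := by
        apply Finset.sum_congr rfl
        intro x hx
        simp only [Finset.mem_compl, Finset.mem_insert,
          Finset.mem_singleton, not_or] at hx
        exact hgo x hx.1 (by tauto)
      have h1 := Finset.sum_add_sum_compl ({u, v₁, v₂, v₃} : Finset V) g
      have h2 := Finset.sum_add_sum_compl ({u, v₁, v₂, v₃} : Finset V) f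
      omega
    have hle : romanDom G ≤ ∑ v, g v := Nat.sInf_le ⟨g, hgRDF, rfl⟩
    omega
  have hcard : B.card ≤ G.degree v₁ + G.degree v₂ + G.degree v₃ := by
    calc B.card ≤ (G.incidenceFinset v₁ ∪ G.incidenceFinset v₂).card
        + (G.incidenceFinset v₃).card := Finset.card_union_le _ _
      _ ≤ (G.incidenceFinset v₁).card + (G.incidenceFinset v₂).card
          + (G.incidenceFinset v₃).card := by
          have := Finset.card_union_le (G.incidenceFinset v₁) (G.incidenceFinset v₂)
          omega
      _ = G.degree v₁ + G.degree v₂ + G.degree v₃ := by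
          rw [SimpleGraph.card_incidenceFinset_eq_degree,
            SimpleGraph.card_incidenceFinset_eq_degree,
            SimpleGraph.card_incidenceFinset_eq_degree]
  have : romanBondage G ≤ B.card := Nat.sInf_le ⟨B, hBsub, rfl, hne⟩
  omega
end
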